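/- Let X* ∈ F_{n,k} be an optimal solution of min_{X∈F_{n,k}} f(X), and let μ₁ ≥ μ₂ ≥ ... ≥ μ_n denote the eigenvalues of −∇f(X*). Let r be the smallest integer with r ≥ k and μ_k > μ_{r+1}, and fix η > 0. Then for any r' ∈ {r, r+1, ..., n−1} and any X ∈ F_{n,k} with ‖X − X*‖_F ≤ η(μ_k − μ_{r'+1})/(2(1+ηβ)), it holds that rank(Π_{F_{n,k}}[X − η∇f(X)]) ≤ r'. -/

import Mathlib

open Matrix

noncomputable def frobNorm {m : ℕ} (A : Matrix (Fin m) (Fin m) ℝ) : ℝ :=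
  Real.sqrt (∑ i, ∑ j, (A i j) ^ 2)

/-- `eigval A j` is the `j`-th largest eigenvalue (1-indexed) of the symmetric matrix `A`. -/
noncomputable def eigval {m : ℕ} (A : Matrix (Fin m) (Fin m) ℝ) (j : ℕ) : ℝ :=
  if h : A.IsHermitian then
    if hj : m - j < m then (h.eigenvalues ∘ Tuple.sort h.eigenvalues) ⟨m - j, hj⟩ else 0
  else 0

/-- spectral norm: largest singular value. -/
noncomputable def specNorm {m : ℕ} (A : Matrix (Fin m) (Fin m) ℝ) : ℝ :=
  Real.sqrt (eigval (Aᵀ * A) 1)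

/-- `P_{n,k}`: rank-`k` orthogonal projection matrices. -/
def ProjSet (n k : ℕ) : Set (Matrix (Fin n) (Fin n) ℝ) :=
  {X | ∃ Q : Matrix (Fin n) (Fin k) ℝ, Qᵀ * Q = 1 ∧ X = Q * Qᵀ}

/-- The Fantope `F_{n,k}`. -/
def Fantope (n k : ℕ) : Set (Matrix (Fin n) (Fin n) ℝ) :=
  {X | X.IsSymm ∧ X.PosSemidef ∧ (1 - X).PosSemidef ∧ X.trace = (k : ℝ)}

/-!
Write `M = -∇f(X*)`. First-order optimality says that `X*` maximises `Z ↦ ⟪M, Z⟫` over the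
Fantope; in an eigenbasis of `M` this forces `X* u = 0` for every eigenvector `u` of `M` whose
eigenvalue is below `μ_k`. So, up to `δ = ‖W - (X* + ηM)‖_F`, which is at most
`(1 + ηβ)‖X - X*‖_F ≤ η(μ_k - μ_{r'+1})/2`, the gradient step `W = X - η∇f(X)` sees a spectral
gap: by a min-max count, `W` has at most `r'` eigenvalues above `ημ_{r'+1} + δ`, while its `i`-th
eigenvalue is at least `ημ_k - δ + λ_i(X*)` whenever `λ_i(X*) > 0`. The projection of `W` onto
the Fantope is `V diag(clip(ν - θ)) Vᵀ`, with `clip x = max 0 (min 1 x)` and `θ` fixed by the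
trace; the second bound shows that the clipped eigenvalues at threshold `ημ_k - δ` already sum to
at least `k`, so only eigenvalues above `ημ_k - δ ≥ ημ_{r'+1} + δ` survive the clipping at `θ`.
-/

open Finset Filter Topology
open scoped RealInnerProductSpace

section Frobenius

variable {ι : Type*} [Fintype ι]

def frobVec : Matrix ι ι ℝ ≃ₗ[ℝ] EuclideanSpace ℝ (ι × ι) :=
  (LinearEquiv.curry ℝ ℝ ι ι).symm ≪≫ₗ (WithLp.linearEquiv 2 ℝ _).symm

omit [Fintype ι] in
@[simp] lemma frobVec_apply (A : Matrix ι ι ℝ) (p : ι × ι) : frobVec A p = A p.1 p.2 := rfl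

lemma inner_frobVec (A B : Matrix ι ι ℝ) : ⟪frobVec A, frobVec B⟫ = (Aᵀ * B).trace := by
  simp only [PiLp.inner_apply, frobVec_apply, Fintype.sum_prod_type, Matrix.trace, Matrix.diag,
    Matrix.mul_apply, transpose_apply, RCLike.inner_apply, conj_trivial]
  rw [Finset.sum_comm]
  simp [mul_comm]

lemma frobNorm_eq_norm {n : ℕ} (A : Matrix (Fin n) (Fin n) ℝ) : frobNorm A = ‖frobVec A‖ := by
  simp [frobNorm, EuclideanSpace.norm_eq, Fintype.sum_prod_type]

lemma trace_mul_le_frobNorm_mul {n : ℕ} {A : Matrix (Fin n) (Fin n) ℝ} (hA : A.IsSymm)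
    (B : Matrix (Fin n) (Fin n) ℝ) : (A * B).trace ≤ frobNorm A * frobNorm B := by
  rw [frobNorm_eq_norm, frobNorm_eq_norm, ← hA.eq, ← inner_frobVec, hA.eq]
  exact real_inner_le_norm _ _

lemma abs_dotProduct_mulVec_le {n : ℕ} (E : Matrix (Fin n) (Fin n) ℝ) (v : Fin n → ℝ) :
    |v ⬝ᵥ (E *ᵥ v)| ≤ frobNorm E * (v ⬝ᵥ v) := by
  have hinner : v ⬝ᵥ (E *ᵥ v) = inner ℝ (frobVec E) (frobVec (vecMulVec v v)) := by
    simp only [PiLp.inner_apply, frobVec_apply, Fintype.sum_prod_type, RCLike.inner_apply,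
      conj_trivial, vecMulVec_apply, dotProduct, mulVec, Finset.mul_sum]
    exact Finset.sum_congr rfl fun i _ => Finset.sum_congr rfl fun j _ => by ring
  have hnorm : ‖frobVec (vecMulVec v v)‖ = v ⬝ᵥ v := by
    rw [← frobNorm_eq_norm, frobNorm]
    simp only [vecMulVec_apply, mul_pow, ← Finset.mul_sum, ← Finset.sum_mul]
    rw [← sq, Real.sqrt_sq (Finset.sum_nonneg fun i _ => sq_nonneg _)]
    simp only [dotProduct, sq]
  rw [hinner, ← hnorm, frobNorm_eq_norm]
  exact abs_real_inner_le_norm _ _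

lemma frobNorm_sub_smul_sub_le {n : ℕ} {η β : ℝ} (hη : 0 ≤ η) {A B G H : Matrix (Fin n) (Fin n) ℝ}
    (hGH : frobNorm (G - H) ≤ β * frobNorm (A - B)) :
    frobNorm ((A - η • G) - (B - η • H)) ≤ (1 + η * β) * frobNorm (A - B) := by
  have htri : frobNorm ((A - η • G) - (B - η • H)) ≤ frobNorm (A - B) + η * frobNorm (G - H) := by
    rw [show (A - η • G) - (B - η • H) = (A - B) + η • (H - G) by module, frobNorm_eq_norm,
      frobNorm_eq_norm, frobNorm_eq_norm, map_add, map_smul, ← norm_neg (frobVec (G - H)),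
      ← map_neg, neg_sub]
    exact (norm_add_le _ _).trans_eq (by rw [norm_smul, Real.norm_of_nonneg hη])
  nlinarith [mul_le_mul_of_nonneg_left hGH hη]

lemma eq_of_norm_sub_le_of_inner_nonneg {F : Type*} [NormedAddCommGroup F]
    [InnerProductSpace ℝ F] {w c p : F} (hc : 0 ≤ ⟪c - w, p - c⟫) (hp : ‖p - w‖ ≤ ‖c - w‖) :
    p = c := by
  have hexp : ‖p - w‖ ^ 2 = ‖p - c‖ ^ 2 + 2 * ⟪c - w, p - c⟫ + ‖c - w‖ ^ 2 := by
    rw [real_inner_comm, ← norm_add_sq_real, sub_add_sub_cancel]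
  have hsq : ‖p - w‖ ^ 2 ≤ ‖c - w‖ ^ 2 := pow_le_pow_left₀ (norm_nonneg _) hp 2
  have : ‖p - c‖ ^ 2 ≤ 0 := by linarith
  exact sub_eq_zero.mp (norm_eq_zero.mp (by nlinarith [norm_nonneg (p - c)]))

end Frobenius

section Orthogonal

variable {ι : Type*} [Fintype ι] [DecidableEq ι] {U : Matrix ι ι ℝ}

lemma Matrix.IsHermitian.exists_eq_conj_diagonal {A : Matrix ι ι ℝ} (hA : A.IsHermitian) :
    ∃ U : Matrix ι ι ℝ, Uᵀ * U = 1 ∧ A = U * diagonal hA.eigenvalues * Uᵀ := by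
  refine ⟨hA.eigenvectorUnitary, ?_, ?_⟩
  · have h := mem_unitaryGroup_iff'.mp hA.eigenvectorUnitary.2
    rwa [star_eq_conjTranspose, conjTranspose_eq_transpose_of_trivial] at h
  · simpa [star_eq_conjTranspose, conjTranspose_eq_transpose_of_trivial] using hA.spectral_theorem

lemma dotProduct_conj_mulVec (d : ι → ℝ) (v : ι → ℝ) :
    v ⬝ᵥ ((U * diagonal d * Uᵀ) *ᵥ v) = ∑ a, d a * (Uᵀ *ᵥ v) a ^ 2 := by
  rw [← mulVec_mulVec, ← mulVec_mulVec, dotProduct_mulVec, ← mulVec_transpose, dotProduct]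
  exact Finset.sum_congr rfl fun a _ => by rw [mulVec_diagonal]; ring

lemma trace_conj_mul (d : ι → ℝ) (B : Matrix ι ι ℝ) :
    (U * diagonal d * Uᵀ * B).trace = ∑ a, d a * (Uᵀ * B * U) a a := by
  rw [show U * diagonal d * Uᵀ * B = U * (diagonal d * (Uᵀ * B)) by simp only [Matrix.mul_assoc],
    trace_mul_comm]
  simp [Matrix.trace, Matrix.mul_assoc, diagonal_mul]

omit [DecidableEq ι] in
lemma mulVec_mulVec_eq_zero_of_forall_col {S : Matrix ι ι ℝ} {c : ι → ℝ}
    (h : ∀ b, c b ≠ 0 → S *ᵥ Uᵀ b = 0) : S *ᵥ (U *ᵥ c) = 0 := by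
  ext i
  simp only [mulVec_mulVec, Pi.zero_apply]
  refine sum_eq_zero fun b _ => ?_
  by_cases hb : c b = 0
  · simp [hb]
  · have := congr_fun (h b hb) i
    simp only [mulVec, dotProduct, transpose_apply, Pi.zero_apply] at this
    simp [Matrix.mul_apply, this]

variable (hU : Uᵀ * U = 1)
include hU

lemma dotProduct_self_eq_sum_sq (v : ι → ℝ) : v ⬝ᵥ v = ∑ a, (Uᵀ *ᵥ v) a ^ 2 := by
  have : (Uᵀ *ᵥ v) ⬝ᵥ (Uᵀ *ᵥ v) = v ⬝ᵥ v := by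
    rw [dotProduct_mulVec, ← mulVec_transpose, transpose_transpose, mulVec_mulVec,
      mul_eq_one_comm.mp hU, one_mulVec]
  rw [← this, dotProduct]
  simp only [sq]

lemma transpose_mul_conj_mul (z : ι → ℝ) : Uᵀ * (U * diagonal z * Uᵀ) * U = diagonal z := by
  simp only [← Matrix.mul_assoc, hU, Matrix.one_mul]
  rw [Matrix.mul_assoc, hU, Matrix.mul_one]

lemma eq_zero_of_transpose_mulVec_eq_zero {v : ι → ℝ} (h : Uᵀ *ᵥ v = 0) : v = 0 := by
  rw [← one_mulVec v, ← mul_eq_one_comm.mp hU, ← mulVec_mulVec, h, mulVec_zero]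

lemma dotProduct_conj_mulVec_le {d v : ι → ℝ} {s : ℝ}
    (h : ∀ b, (Uᵀ *ᵥ v) b ≠ 0 → d b ≤ s) : v ⬝ᵥ ((U * diagonal d * Uᵀ) *ᵥ v) ≤ s * (v ⬝ᵥ v) := by
  rw [dotProduct_conj_mulVec, dotProduct_self_eq_sum_sq hU, mul_sum]
  refine sum_le_sum fun b _ => ?_
  by_cases hb : (Uᵀ *ᵥ v) b = 0
  · simp [hb]
  · exact mul_le_mul_of_nonneg_right (h b hb) (sq_nonneg _)

lemma le_dotProduct_conj_mulVec {d v : ι → ℝ} {s : ℝ}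
    (h : ∀ b, (Uᵀ *ᵥ v) b ≠ 0 → s ≤ d b) : s * (v ⬝ᵥ v) ≤ v ⬝ᵥ ((U * diagonal d * Uᵀ) *ᵥ v) := by
  rw [dotProduct_conj_mulVec, dotProduct_self_eq_sum_sq hU, mul_sum]
  refine sum_le_sum fun b _ => ?_
  by_cases hb : (Uᵀ *ᵥ v) b = 0
  · simp [hb]
  · exact mul_le_mul_of_nonneg_right (h b hb) (sq_nonneg _)

lemma exists_conj_mulVec_eq {x v : ι → ℝ}
    (h : ∀ b, (Uᵀ *ᵥ v) b ≠ 0 → x b ≠ 0) : ∃ w, (U * diagonal x * Uᵀ) *ᵥ w = v := by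
  refine ⟨U *ᵥ fun b => (Uᵀ *ᵥ v) b / x b, ?_⟩
  have hcoord : diagonal x *ᵥ (fun b => (Uᵀ *ᵥ v) b / x b) = Uᵀ *ᵥ v := by
    ext b
    rw [mulVec_diagonal]
    by_cases hb : (Uᵀ *ᵥ v) b = 0
    · simp [hb]
    · exact mul_div_cancel₀ _ (h b hb)
  rw [mulVec_mulVec, Matrix.mul_assoc, hU, Matrix.mul_one, ← mulVec_mulVec, hcoord, mulVec_mulVec,
    mul_eq_one_comm.mp hU, one_mulVec]

lemma rank_conj_diagonal (p : ι → ℝ) : (U * diagonal p * Uᵀ).rank = #{a | p a ≠ 0} := by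
  have hdet : IsUnit U.det :=
    .of_mul_eq_one Uᵀ.det (by rw [← det_mul, mul_eq_one_comm.mp hU, det_one])
  rw [rank_mul_eq_left_of_isUnit_det Uᵀ _ (by rwa [det_transpose]),
    rank_mul_eq_right_of_isUnit_det U _ hdet, rank_diagonal, Fintype.card_subtype]

end Orthogonal

section Counting

variable {ι : Type*} [Fintype ι] [DecidableEq ι]

omit [DecidableEq ι] in
lemma exists_ne_zero_mulVec_eq_zero_on (B C : Matrix ι ι ℝ) (S T : Finset ι)
    (h : #S + #T < Fintype.card ι) :
    ∃ v : ι → ℝ, v ≠ 0 ∧ (∀ a ∈ S, (B *ᵥ v) a = 0) ∧ (∀ b ∈ T, (C *ᵥ v) b = 0) := by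
  let φ : (ι → ℝ) →ₗ[ℝ] (S → ℝ) × (T → ℝ) :=
    ((LinearMap.funLeft ℝ ℝ ((↑) : S → ι)).comp B.mulVecLin).prod
      ((LinearMap.funLeft ℝ ℝ ((↑) : T → ι)).comp C.mulVecLin)
  have hker : LinearMap.ker φ ≠ ⊥ := LinearMap.ker_ne_bot_of_finrank_lt <| by
    simpa [Module.finrank_prod] using h
  obtain ⟨v, hv, hv0⟩ := (Submodule.ne_bot_iff _).mp hker
  refine ⟨v, hv0, fun a ha => ?_, fun b hb => ?_⟩
  · simpa [φ, LinearMap.funLeft] using congr_fun (congr_arg Prod.fst hv) ⟨a, ha⟩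
  · simpa [φ, LinearMap.funLeft] using congr_fun (congr_arg Prod.snd hv) ⟨b, hb⟩

variable {V : Matrix ι ι ℝ} (hV : Vᵀ * V = 1)
include hV

/-- A subspace of dimension `≥ #A` on which the quadratic form of `V diag(d) Vᵀ` is at most `t`
meets the span of the eigenvectors with eigenvalue `> t` only in `0`. -/
lemma card_add_card_lt_le_of_forall_dotProduct_le (d : ι → ℝ) (C : Matrix ι ι ℝ) (A : Finset ι)
    (t : ℝ) (hq : ∀ v : ι → ℝ, (∀ b ∉ A, (C *ᵥ v) b = 0) →
      v ⬝ᵥ ((V * diagonal d * Vᵀ) *ᵥ v) ≤ t * (v ⬝ᵥ v)) :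
    #A + #{a | t < d a} ≤ Fintype.card ι := by
  by_contra! hcard
  obtain ⟨v, hv0, hvd, hvA⟩ :=
    exists_ne_zero_mulVec_eq_zero_on Vᵀ C ({a | t < d a} : Finset ι)ᶜ Aᶜ (by
      simp only [card_compl]
      have := card_le_univ A
      have := card_le_univ ({a | t < d a} : Finset ι)
      omega)
  have hle := hq v fun b hb => hvA b (mem_compl.mpr hb)
  rw [dotProduct_conj_mulVec, dotProduct_self_eq_sum_sq hV, mul_sum, ← sub_nonpos,
    ← sum_sub_distrib] at hle
  have hterm : ∀ a, 0 ≤ d a * (Vᵀ *ᵥ v) a ^ 2 - t * (Vᵀ *ᵥ v) a ^ 2 := by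
    intro a
    by_cases ha : t < d a
    · nlinarith [sq_nonneg ((Vᵀ *ᵥ v) a)]
    · simp [hvd a (by simpa using ha)]
  have hzero : Vᵀ *ᵥ v = 0 := by
    ext a
    have := (sum_eq_zero_iff_of_nonneg fun a _ => hterm a).mp
      (le_antisymm hle (sum_nonneg fun a _ => hterm a)) a (mem_univ a)
    by_cases ha : t < d a
    · have : (d a - t) * (Vᵀ *ᵥ v) a ^ 2 = 0 := by linarith
      simpa [(sub_pos.mpr ha).ne'] using this
    · exact hvd a (by simpa using ha)
  exact hv0 (eq_zero_of_transpose_mulVec_eq_zero hV hzero)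

lemma card_le_card_le_of_forall_le_dotProduct (d : ι → ℝ) (C : Matrix ι ι ℝ) (A : Finset ι)
    (t : ℝ) (hq : ∀ v : ι → ℝ, (∀ b ∉ A, (C *ᵥ v) b = 0) →
      t * (v ⬝ᵥ v) ≤ v ⬝ᵥ ((V * diagonal d * Vᵀ) *ᵥ v)) :
    #A ≤ #{a | t ≤ d a} := by
  have hneg := card_add_card_lt_le_of_forall_dotProduct_le hV (-d) C A (-t) fun v hv => by
    have := hq v hv
    simp only [dotProduct_conj_mulVec, Pi.neg_apply, neg_mul, sum_neg_distrib] at this ⊢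
    linarith
  have hsplit := card_filter_add_card_filter_not (s := univ) (fun a => t ≤ d a)
  simp only [Pi.neg_apply, neg_lt_neg_iff, not_le] at hneg hsplit
  simp only [card_univ] at hsplit
  omega

end Counting

section SortedEigenvalues

variable {n : ℕ} {A : Matrix (Fin n) (Fin n) ℝ} (hA : A.IsHermitian)
include hA

lemma eigval_eq {j : ℕ} (hj1 : 1 ≤ j) (hjn : j ≤ n) :
    eigval A j = hA.eigenvalues (Tuple.sort hA.eigenvalues ⟨n - j, by omega⟩) := by
  rw [eigval, dif_pos hA, dif_pos (by omega)]
  rfl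

lemma eigval_succ (j : Fin n) :
    eigval A (j + 1) = hA.eigenvalues (Tuple.sort hA.eigenvalues j.rev) :=
  eigval_eq hA (by omega) j.isLt

lemma eigval_antitone {j j' : ℕ} (hj1 : 1 ≤ j) (hjj' : j ≤ j') (hj'n : j' ≤ n) :
    eigval A j' ≤ eigval A j := by
  rw [eigval_eq hA hj1 (by omega), eigval_eq hA (by omega) hj'n]
  exact Tuple.monotone_sort hA.eigenvalues (Fin.mk_le_mk.mpr (by omega))

lemma le_card_eigval_le {j : ℕ} (hj1 : 1 ≤ j) (hjn : j ≤ n) :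
    j ≤ #{a | eigval A j ≤ hA.eigenvalues a} := by
  have hIci : #(Ici (⟨n - j, by omega⟩ : Fin n)) = j := by simp [Fin.card_Ici]; omega
  refine hIci.ge.trans (card_le_card_of_injOn (Tuple.sort hA.eigenvalues) (fun p hp => ?_)
    (Tuple.sort hA.eigenvalues).injective.injOn)
  simp only [coe_filter, mem_univ, true_and, Set.mem_ofPred_eq, eigval_eq hA hj1 hjn]
  exact Tuple.monotone_sort hA.eigenvalues (mem_Ici.mp hp)

lemma card_eigval_lt_lt {j : ℕ} (hj1 : 1 ≤ j) (hjn : j ≤ n) :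
    #{a | eigval A j < hA.eigenvalues a} < j := by
  have hIoi : #(Ioi (⟨n - j, by omega⟩ : Fin n)) = j - 1 := by simp [Fin.card_Ioi]; omega
  have hle : #{a | eigval A j < hA.eigenvalues a} ≤ #(Ioi (⟨n - j, by omega⟩ : Fin n)) := by
    refine card_le_card_of_injOn (Tuple.sort hA.eigenvalues).symm (fun a ha => ?_)
      (Tuple.sort hA.eigenvalues).symm.injective.injOn
    simp only [coe_filter, mem_univ, true_and, Set.mem_ofPred_eq, eigval_eq hA hj1 hjn] at ha
    simp only [coe_Ioi, Set.mem_Ioi]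
    by_contra! hle
    have := Tuple.monotone_sort hA.eigenvalues hle
    simp only [Function.comp_apply, Equiv.apply_symm_apply] at this
    linarith
  omega

lemma le_eigval_of_le_card {j : ℕ} (hj1 : 1 ≤ j) (hjn : j ≤ n) {t : ℝ}
    (h : j ≤ #{a | t ≤ hA.eigenvalues a}) : t ≤ eigval A j := by
  by_contra! hlt
  have hsub : ({a | t ≤ hA.eigenvalues a} : Finset (Fin n))
      ⊆ ({a | eigval A j < hA.eigenvalues a} : Finset (Fin n)) := by
    intro a ha
    simp only [mem_filter, mem_univ, true_and] at ha ⊢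
    linarith
  have := card_le_card hsub
  have := card_eigval_lt_lt hA hj1 hjn
  omega

lemma sum_eigval_succ (φ : ℝ → ℝ) :
    ∑ j : Fin n, φ (eigval A (j + 1)) = ∑ a, φ (hA.eigenvalues a) := by
  simp only [eigval_succ hA]
  exact (Equiv.sum_comp Fin.revPerm fun p => φ (hA.eigenvalues (Tuple.sort hA.eigenvalues p))).trans
    (Equiv.sum_comp (Tuple.sort hA.eigenvalues) fun a => φ (hA.eigenvalues a))

end SortedEigenvalues

section CappedSimplex

def cappedSimplex (ι : Type*) [Fintype ι] (k : ℝ) : Set (ι → ℝ) :=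
  {z | (∀ a, z a ∈ Set.Icc 0 1) ∧ ∑ a, z a = k}

def clip (x : ℝ) : ℝ := max 0 (min 1 x)

lemma clip_mem_Icc (x : ℝ) : clip x ∈ Set.Icc 0 1 :=
  ⟨le_max_left _ _, max_le zero_le_one (min_le_left _ _)⟩

lemma monotone_clip : Monotone clip := fun _ _ h => max_le_max le_rfl (min_le_min le_rfl h)

lemma continuous_clip : Continuous clip :=
  continuous_const.max (continuous_const.min continuous_id)

lemma clip_of_nonpos {x : ℝ} (h : x ≤ 0) : clip x = 0 := by
  simp [clip, min_eq_right (h.trans zero_le_one), h]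

lemma clip_of_one_le {x : ℝ} (h : 1 ≤ x) : clip x = 1 := by
  simp [clip, h]

lemma clip_of_mem_Icc {x : ℝ} (h : x ∈ Set.Icc 0 1) : clip x = x := by
  simp [clip, h.1, h.2]

lemma le_clip {q x : ℝ} (hq : q ∈ Set.Icc 0 1) (h : q ≤ x) : q ≤ clip x :=
  le_max_of_le_right (le_min hq.2 h)

lemma pos_of_clip_ne_zero {x : ℝ} (h : clip x ≠ 0) : 0 < x := by
  by_contra! hx
  exact h (clip_of_nonpos hx)

lemma clip_sub_mul_nonneg (x : ℝ) {z : ℝ} (hz : z ∈ Set.Icc 0 1) :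
    0 ≤ (clip x - x) * (z - clip x) := by
  rcases le_or_gt x 0 with hx | hx
  · rw [clip_of_nonpos hx]
    nlinarith [hz.1]
  rcases le_or_gt x 1 with hx1 | hx1
  · simp [clip_of_mem_Icc ⟨hx.le, hx1⟩]
  · rw [clip_of_one_le hx1.le]
    nlinarith [hz.2]

variable {ι : Type*} [Fintype ι]

lemma clip_mem_cappedSimplex {d : ι → ℝ} {θ k : ℝ} (hθ : ∑ a, clip (d a - θ) = k) :
    (fun a => clip (d a - θ)) ∈ cappedSimplex ι k :=
  ⟨fun _ => clip_mem_Icc _, hθ⟩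

lemma exists_sum_clip_eq (d : ι → ℝ) {k : ℕ} (hk : k ≤ Fintype.card ι) :
    ∃ θ, ∑ a, clip (d a - θ) = k := by
  set R := ∑ a, |d a|
  have hdR : ∀ a, |d a| ≤ R := fun a => single_le_sum (fun b _ => abs_nonneg (d b)) (mem_univ a)
  have hcont : Continuous fun θ => ∑ a, clip (d a - θ) :=
    continuous_finsetSum _ fun a _ => continuous_clip.comp (continuous_const.sub continuous_id)
  have hR : ∑ a, clip (d a - R) = 0 :=
    sum_eq_zero fun a _ => clip_of_nonpos (by linarith [le_abs_self (d a), hdR a])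
  have hR' : ∑ a, clip (d a - (-R - 1)) = Fintype.card ι := by
    rw [sum_congr rfl fun a _ => clip_of_one_le (by linarith [neg_abs_le (d a), hdR a])]
    simp
  obtain ⟨θ, hθ⟩ := intermediate_value_univ R (-R - 1) hcont
    (show (k : ℝ) ∈ Set.Icc _ _ by rw [hR, hR']; exact ⟨k.cast_nonneg, by exact_mod_cast hk⟩)
  exact ⟨θ, hθ⟩

/-- `clip (d - θ)` satisfies the variational inequality of the projection of `d` onto the
capped simplex. -/
lemma sum_clip_sub_mul_nonneg {d ζ : ι → ℝ} {θ k : ℝ} (hθ : ∑ a, clip (d a - θ) = k)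
    (hζ : ζ ∈ cappedSimplex ι k) :
    0 ≤ ∑ a, (clip (d a - θ) - d a) * (ζ a - clip (d a - θ)) := by
  have hsplit : ∑ a, (clip (d a - θ) - d a) * (ζ a - clip (d a - θ))
      = ∑ a, (clip (d a - θ) - (d a - θ)) * (ζ a - clip (d a - θ))
        - θ * (∑ a, ζ a - ∑ a, clip (d a - θ)) := by
    rw [← sum_sub_distrib, mul_sum, ← sum_sub_distrib]
    exact sum_congr rfl fun a _ => by ring
  rw [hsplit, hζ.2, hθ, sub_self, mul_zero, sub_zero]
  exact sum_nonneg fun a _ => clip_sub_mul_nonneg _ (hζ.1 a)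

lemma lt_of_clip_sub_ne_zero {d : ι → ℝ} {θ θ' k : ℝ} (hθ : ∑ a, clip (d a - θ) = k)
    (hθ' : k ≤ ∑ a, clip (d a - θ')) {a : ι} (ha : clip (d a - θ) ≠ 0) : θ' < d a := by
  have hpos := pos_of_clip_ne_zero ha
  rcases le_or_gt θ' θ with h | h
  · linarith
  have hle : ∀ b, clip (d b - θ') ≤ clip (d b - θ) := fun b => monotone_clip (by linarith)
  have heq : ∀ b ∈ univ, clip (d b - θ) - clip (d b - θ') = 0 := by
    refine (sum_eq_zero_iff_of_nonneg fun b _ => sub_nonneg.mpr (hle b)).mp ?_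
    exact le_antisymm (by rw [sum_sub_distrib]; linarith)
      (sum_nonneg fun b _ => sub_nonneg.mpr (hle b))
  have : clip (d a - θ') ≠ 0 := by rwa [← sub_eq_zero.mp (heq a (mem_univ a))]
  linarith [pos_of_clip_ne_zero this]

/-- If `z a > 0`, some `b` with `μ a < μ b` is unsaturated, and moving mass from `a` to `b`
increases the objective. -/
lemma eq_zero_of_isMaxOn_cappedSimplex [DecidableEq ι] {μ z : ι → ℝ} {k : ℕ}
    (hz : z ∈ cappedSimplex ι k) (hmax : IsMaxOn (fun w => ∑ c, μ c * w c) (cappedSimplex ι k) z)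
    {a : ι} (ha : k ≤ #{b | μ a < μ b}) : z a = 0 := by
  set B : Finset ι := {b | μ a < μ b}
  have hlt : ∀ b ∈ B, μ a < μ b := fun b hb => (mem_filter.mp hb).2
  by_contra hza
  have hza' : 0 < z a := lt_of_le_of_ne (hz.1 a).1 (Ne.symm hza)
  have haB : a ∉ B := fun ha => lt_irrefl _ (hlt a ha)
  obtain ⟨b, hbB, hzb⟩ : ∃ b ∈ B, z b < 1 := by
    by_contra! hsat
    have hkB : (k : ℝ) ≤ ∑ c ∈ B, z c :=
      calc (k : ℝ) ≤ #B := by exact_mod_cast ha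
        _ = ∑ c ∈ B, (1 : ℝ) := by simp
        _ ≤ ∑ c ∈ B, z c := sum_le_sum hsat
    have hsub := sum_le_sum_of_subset_of_nonneg (subset_univ (insert a B))
      fun c _ _ => (hz.1 c).1
    rw [sum_insert haB, hz.2] at hsub
    linarith
  have hba : b ≠ a := fun h => haB (h ▸ hbB)
  set ε := min (z a) (1 - z b)
  have hε : 0 < ε := lt_min hza' (by linarith)
  set w := z + ε • (Pi.single b 1 - Pi.single a 1)
  have hwb : w b = z b + ε := by simp [w, hba]
  have hwa : w a = z a - ε := by simp [w, hba.symm, sub_eq_add_neg]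
  have hwc : ∀ c, c ≠ b → c ≠ a → w c = z c := fun c hcb hca => by simp [w, hcb, hca]
  have hw : w ∈ cappedSimplex ι k := by
    refine ⟨fun c => ?_, by simp [w, sum_add_distrib, hz.2, ← mul_sum, sum_sub_distrib]⟩
    have hεa : ε ≤ z a := min_le_left _ _
    have hεb : ε ≤ 1 - z b := min_le_right _ _
    by_cases hcb : c = b
    · subst hcb
      exact hwb ▸ ⟨by linarith [(hz.1 c).1], by linarith⟩
    by_cases hca : c = a
    · subst hca
      exact hwa ▸ ⟨by linarith, by linarith [(hz.1 c).2]⟩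
    · exact hwc c hcb hca ▸ hz.1 c
  have hgain : ∑ c, μ c * w c = ∑ c, μ c * z c + ε * (μ b - μ a) := by
    simp only [w, Pi.add_apply, Pi.smul_apply, Pi.sub_apply, Pi.single_apply, smul_eq_mul,
      mul_add, mul_sub, mul_ite, mul_one, mul_zero, sum_add_distrib, sum_sub_distrib, sum_ite_eq',
      mem_univ, if_true]
    ring
  have := hmax hw
  simp only [Set.mem_ofPred_eq, hgain] at this
  nlinarith [hlt b hbB]

end CappedSimplex

section Fantope

variable {n k : ℕ}

lemma convex_fantope : Convex ℝ (Fantope n k) := by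
  intro X hX Y hY a b ha hb hab
  have hone : (1 : Matrix (Fin n) (Fin n) ℝ) - (a • X + b • Y) = a • (1 - X) + b • (1 - Y) := by
    calc (1 : Matrix (Fin n) (Fin n) ℝ) - (a • X + b • Y) = (a + b) • 1 - (a • X + b • Y) := by
          rw [hab, one_smul]
      _ = a • (1 - X) + b • (1 - Y) := by module
  refine ⟨(hX.1.smul a).add (hY.1.smul b), (hX.2.1.smul ha).add (hY.2.1.smul hb), ?_, ?_⟩
  · rw [hone]
    exact (hX.2.2.1.smul ha).add (hY.2.2.1.smul hb)
  · rw [trace_add, trace_smul, trace_smul, hX.2.2.2, hY.2.2.2, smul_eq_mul, smul_eq_mul,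
      ← add_mul, hab, one_mul]

variable {U : Matrix (Fin n) (Fin n) ℝ} (hU : Uᵀ * U = 1)
include hU

lemma conj_diagonal_mem_fantope {z : Fin n → ℝ} (hz : z ∈ cappedSimplex (Fin n) k) :
    U * diagonal z * Uᵀ ∈ Fantope n k := by
  have hone : (1 : Matrix (Fin n) (Fin n) ℝ) - U * diagonal z * Uᵀ
      = U * diagonal (1 - z) * Uᵀ := by
    rw [Pi.sub_def, ← diagonal_sub, diagonal_one', Matrix.mul_sub, Matrix.sub_mul, Matrix.mul_one,
      mul_eq_one_comm.mp hU]
  have hpsd : ∀ d : Fin n → ℝ, 0 ≤ d → (U * diagonal d * Uᵀ).PosSemidef := fun d hd => by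
    simpa [conjTranspose_eq_transpose_of_trivial] using
      (PosSemidef.diagonal hd).mul_mul_conjTranspose_same U
  refine ⟨?_, hpsd z fun a => (hz.1 a).1, ?_, ?_⟩
  · simp [IsSymm, transpose_mul, Matrix.mul_assoc]
  · rw [hone]
    exact hpsd _ fun a => sub_nonneg.mpr (hz.1 a).2
  · rw [trace_mul_cycle, hU, Matrix.one_mul, trace_diagonal, hz.2]

lemma diag_conj_mem_cappedSimplex {Z : Matrix (Fin n) (Fin n) ℝ} (hZ : Z ∈ Fantope n k) :
    (Uᵀ * Z * U).diag ∈ cappedSimplex (Fin n) k := by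
  have hpsd : ∀ Y : Matrix (Fin n) (Fin n) ℝ, Y.PosSemidef → (Uᵀ * Y * U).PosSemidef :=
    fun Y hY => by simpa [conjTranspose_eq_transpose_of_trivial] using
      hY.conjTranspose_mul_mul_same U
  have hone : Uᵀ * (1 - Z) * U = 1 - Uᵀ * Z * U := by
    rw [Matrix.mul_sub, Matrix.sub_mul, Matrix.mul_one, hU]
  refine ⟨fun a => ⟨(hpsd Z hZ.2.1).diag_nonneg, ?_⟩, ?_⟩
  · have := (hpsd _ hZ.2.2.1).diag_nonneg (i := a)
    rw [hone] at this
    simpa using this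
  · rw [← trace, trace_mul_cycle, mul_eq_one_comm.mp hU, Matrix.one_mul, hZ.2.2.2]

lemma eq_conj_clip_of_forall_frobNorm_le {W : Matrix (Fin n) (Fin n) ℝ} {d : Fin n → ℝ}
    (hW : W = U * diagonal d * Uᵀ) {θ : ℝ} (hθ : ∑ a, clip (d a - θ) = k)
    {P : Matrix (Fin n) (Fin n) ℝ} (hP : P ∈ Fantope n k)
    (hmin : ∀ Z ∈ Fantope n k, frobNorm (P - W) ≤ frobNorm (Z - W)) :
    P = U * diagonal (fun a => clip (d a - θ)) * Uᵀ := by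
  set p := fun a => clip (d a - θ)
  set C := U * diagonal p * Uᵀ
  have hsub : C - W = U * diagonal (p - d) * Uᵀ := by
    rw [hW, ← Matrix.sub_mul, ← Matrix.mul_sub, diagonal_sub]
    rfl
  have hdiag : ∀ a, (Uᵀ * (P - C) * U) a a = (Uᵀ * P * U).diag a - p a := fun a => by
    rw [Matrix.mul_sub, Matrix.sub_mul, transpose_mul_conj_mul hU]
    simp
  have hvi : 0 ≤ ⟪frobVec C - frobVec W, frobVec P - frobVec C⟫ := by
    rw [← map_sub, ← map_sub, inner_frobVec, hsub]
    simp only [transpose_mul, transpose_transpose, diagonal_transpose, ← Matrix.mul_assoc,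
      trace_conj_mul, hdiag]
    exact sum_clip_sub_mul_nonneg hθ (diag_conj_mem_cappedSimplex hU hP)
  refine frobVec.injective (eq_of_norm_sub_le_of_inner_nonneg hvi ?_)
  simpa only [← map_sub, ← frobNorm_eq_norm] using
    hmin C (conj_diagonal_mem_fantope hU (clip_mem_cappedSimplex hθ))

end Fantope

section Optimality

lemma nonneg_of_forall_add_mul_nonneg {c b : ℝ} (h : ∀ t : ℝ, 0 < t → t ≤ 1 → 0 ≤ c + t * b) :
    0 ≤ c := by
  have hlim : Tendsto (fun t : ℝ => c + t * b) (𝓝[>] 0) (𝓝 c) := by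
    have hcont : Continuous fun t : ℝ => c + t * b := by fun_prop
    simpa using (hcont.tendsto 0).mono_left nhdsWithin_le_nhds
  refine ge_of_tendsto hlim ?_
  filter_upwards [Ioc_mem_nhdsGT zero_lt_one] with t ht using h t ht.1 ht.2

/-- Optimality of `Xstar` is tested along the segment towards `Z`: the gradient inequality at
the intermediate point and the Lipschitz bound on `grad` give the first-order condition up to
an error `O(t)`. -/
lemma isMinOn_trace_grad_mul {n : ℕ} {S : Set (Matrix (Fin n) (Fin n) ℝ)} (hS : Convex ℝ S)
    (f : Matrix (Fin n) (Fin n) ℝ → ℝ) (grad : Matrix (Fin n) (Fin n) ℝ → Matrix (Fin n) (Fin n) ℝ)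
    (β : ℝ) (hgradSymm : ∀ X ∈ S, (grad X).IsSymm)
    (hconv : ∀ X ∈ S, ∀ Y ∈ S, f X + (grad X * (Y - X)).trace ≤ f Y)
    (hsmooth : ∀ X ∈ S, ∀ Y ∈ S, frobNorm (grad X - grad Y) ≤ β * frobNorm (X - Y))
    {Xstar : Matrix (Fin n) (Fin n) ℝ} (hXstar : Xstar ∈ S) (hopt : IsMinOn f S Xstar) :
    IsMinOn (fun Z => (grad Xstar * Z).trace) S Xstar := by
  refine isMinOn_iff.mpr fun Z hZ => ?_
  set D := Z - Xstar
  suffices h : 0 ≤ (grad Xstar * D).trace by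
    rw [Matrix.mul_sub, trace_sub] at h
    linarith
  refine nonneg_of_forall_add_mul_nonneg (b := β * frobNorm D ^ 2) fun t ht0 ht1 => ?_
  set Xt := Xstar + t • D
  have hXt : Xt ∈ S := hS.add_smul_sub_mem hXstar hZ ⟨ht0.le, ht1⟩
  have hdesc : 0 ≤ (grad Xt * D).trace := by
    have h1 := hconv Xt hXt Xstar hXstar
    have h2 := isMinOn_iff.mp hopt Xt hXt
    rw [show Xstar - Xt = (-t) • D by simp [Xt], Matrix.mul_smul, trace_smul, smul_eq_mul] at h1
    nlinarith
  have hlip : ((grad Xt - grad Xstar) * D).trace ≤ t * (β * frobNorm D ^ 2) := by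
    have hdist : frobNorm (Xt - Xstar) = t * frobNorm D := by
      rw [show Xt - Xstar = t • D by simp [Xt], frobNorm_eq_norm, frobNorm_eq_norm, map_smul,
        norm_smul, Real.norm_of_nonneg ht0.le]
    calc ((grad Xt - grad Xstar) * D).trace
        ≤ frobNorm (grad Xt - grad Xstar) * frobNorm D :=
          trace_mul_le_frobNorm_mul ((hgradSymm Xt hXt).sub (hgradSymm Xstar hXstar)) D
      _ ≤ β * frobNorm (Xt - Xstar) * frobNorm D :=
          mul_le_mul_of_nonneg_right (hsmooth Xt hXt Xstar hXstar) (by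
            rw [frobNorm_eq_norm]; exact norm_nonneg _)
      _ = t * (β * frobNorm D ^ 2) := by rw [hdist]; ring
  rw [Matrix.sub_mul, trace_sub] at hlip
  linarith

end Optimality

/-- In the eigenbasis of `M`, the diagonal of `Xstar` maximises `∑ μ_c z_c` over the capped
simplex. -/
lemma mulVec_col_eq_zero_of_isMaxOn {n k : ℕ} {M Xstar U : Matrix (Fin n) (Fin n) ℝ}
    (hU : Uᵀ * U = 1) {μ : Fin n → ℝ} (hM : M = U * diagonal μ * Uᵀ)
    (hXstar : Xstar ∈ Fantope n k) (hmax : IsMaxOn (fun Z => (M * Z).trace) (Fantope n k) Xstar)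
    {a : Fin n} (ha : k ≤ #{b | μ a < μ b}) : Xstar *ᵥ Uᵀ a = 0 := by
  have htrace : ∀ Z, (M * Z).trace = ∑ c, μ c * (Uᵀ * Z * U).diag c := fun Z => by
    rw [hM, trace_conj_mul]
    rfl
  have hzmax : IsMaxOn (fun w => ∑ c, μ c * w c) (cappedSimplex (Fin n) k)
      (Uᵀ * Xstar * U).diag := by
    refine isMaxOn_iff.mpr fun w hw => ?_
    have := isMaxOn_iff.mp hmax _ (conj_diagonal_mem_fantope hU hw)
    simpa only [htrace, transpose_mul_conj_mul hU, diag_diagonal] using this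
  have hza := eq_zero_of_isMaxOn_cappedSimplex (diag_conj_mem_cappedSimplex hU hXstar) hzmax ha
  have hquad : star (Uᵀ a) ⬝ᵥ Xstar *ᵥ Uᵀ a = (Uᵀ * Xstar * U).diag a := by
    simp only [star_trivial, dotProduct, mulVec, diag_apply, Matrix.mul_apply, transpose_apply,
      mul_sum, sum_mul]
    rw [sum_comm]
    exact sum_congr rfl fun i _ => sum_congr rfl fun j _ => by ring
  exact (hXstar.2.1.dotProduct_mulVec_zero_iff _).mp (hquad.trans hza)

section Perturbation

variable {n k : ℕ} {M Xstar W U : Matrix (Fin n) (Fin n) ℝ} {μ : Fin n → ℝ} {m η δ : ℝ}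

lemma abs_dotProduct_mulVec_sub_le (hδ : frobNorm (W - (Xstar + η • M)) ≤ δ) (v : Fin n → ℝ) :
    |v ⬝ᵥ (W *ᵥ v) - (v ⬝ᵥ (Xstar *ᵥ v) + η * v ⬝ᵥ (M *ᵥ v))| ≤ δ * (v ⬝ᵥ v) := by
  have hvv : 0 ≤ v ⬝ᵥ v := by simpa using dotProduct_star_self_nonneg v
  calc |v ⬝ᵥ (W *ᵥ v) - (v ⬝ᵥ (Xstar *ᵥ v) + η * v ⬝ᵥ (M *ᵥ v))|
      = |v ⬝ᵥ ((W - (Xstar + η • M)) *ᵥ v)| := by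
        simp [sub_mulVec, add_mulVec, smul_mulVec, dotProduct_sub, dotProduct_add]
    _ ≤ frobNorm (W - (Xstar + η • M)) * (v ⬝ᵥ v) := abs_dotProduct_mulVec_le _ v
    _ ≤ δ * (v ⬝ᵥ v) := mul_le_mul_of_nonneg_right hδ hvv

variable (hU : Uᵀ * U = 1) (hM : M = U * diagonal μ * Uᵀ)
  (hker : ∀ a, μ a < m → Xstar *ᵥ Uᵀ a = 0) (hη : 0 ≤ η)
  (hδ : frobNorm (W - (Xstar + η • M)) ≤ δ)
include hU hM hker hη hδ

/-- On the eigenvectors of `M` with eigenvalue `≤ s < m`, `Xstar` vanishes, so the quadratic form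
of `W` is at most `η s + δ` there. -/
lemma card_lt_eigenvalues_le {V : Matrix (Fin n) (Fin n) ℝ} (hV : Vᵀ * V = 1) {ν : Fin n → ℝ}
    (hW : W = V * diagonal ν * Vᵀ) {s : ℝ} (hsm : s < m) :
    #{a | η * s + δ < ν a} ≤ #{b | s < μ b} := by
  have hq : ∀ v : Fin n → ℝ, (∀ b ∉ ({b | μ b ≤ s} : Finset (Fin n)), (Uᵀ *ᵥ v) b = 0) →
      v ⬝ᵥ ((V * diagonal ν * Vᵀ) *ᵥ v) ≤ (η * s + δ) * (v ⬝ᵥ v) := fun v hv => by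
    have hsupp : ∀ b, (Uᵀ *ᵥ v) b ≠ 0 → μ b ≤ s := fun b hb => by
      by_contra h
      exact hb (hv b (by simpa using h))
    have hXv : Xstar *ᵥ v = 0 := by
      rw [← one_mulVec v, ← mul_eq_one_comm.mp hU, ← mulVec_mulVec]
      exact mulVec_mulVec_eq_zero_of_forall_col fun b hb => hker b ((hsupp b hb).trans_lt hsm)
    have hMv : v ⬝ᵥ (M *ᵥ v) ≤ s * (v ⬝ᵥ v) := hM ▸ dotProduct_conj_mulVec_le hU hsupp
    have habs := (abs_le.mp (abs_dotProduct_mulVec_sub_le hδ v)).2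
    rw [hXv, dotProduct_zero] at habs
    rw [← hW]
    nlinarith [mul_le_mul_of_nonneg_left hMv hη]
  have hcount := card_add_card_lt_le_of_forall_dotProduct_le hV ν Uᵀ _ _ hq
  have hsplit := card_filter_add_card_filter_not (s := univ) (fun b => μ b ≤ s)
  simp only [not_le, card_univ, Fintype.card_fin] at hsplit hcount
  omega

/-- The eigenvectors of `Xstar` with eigenvalue `≥ eigval Xstar i > 0` span a subspace of the range
of `Xstar`, on which the quadratic form of `M` is at least `m`. -/
lemma le_eigval_of_eigval_pos (hXstar : Xstar ∈ Fantope n k) (hWh : W.IsHermitian) {i : ℕ}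
    (hi1 : 1 ≤ i) (hin : i ≤ n) (hq : 0 < eigval Xstar i) :
    η * m - δ + eigval Xstar i ≤ eigval W i := by
  have hXh : Xstar.IsHermitian := hXstar.2.1.isHermitian
  obtain ⟨Y, hY, hXdec⟩ := hXh.exists_eq_conj_diagonal
  obtain ⟨V, hV, hWdec⟩ := hWh.exists_eq_conj_diagonal
  set q := eigval Xstar i
  refine le_eigval_of_le_card hWh hi1 hin ((le_card_eigval_le hXh hi1 hin).trans
    (card_le_card_le_of_forall_le_dotProduct hV _ Yᵀ _ _ fun v hv => ?_))
  have hsupp : ∀ b, (Yᵀ *ᵥ v) b ≠ 0 → q ≤ hXh.eigenvalues b := fun b hb => by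
    by_contra h
    exact hb (hv b (by simpa using h))
  have hXv : q * (v ⬝ᵥ v) ≤ v ⬝ᵥ (Xstar *ᵥ v) := by
    conv_rhs => rw [hXdec]
    exact le_dotProduct_conj_mulVec hY hsupp
  obtain ⟨w, hw⟩ := exists_conj_mulVec_eq hY fun b hb => (hq.trans_le (hsupp b hb)).ne'
  rw [← hXdec] at hw
  have hsuppM : ∀ a, (Uᵀ *ᵥ v) a ≠ 0 → m ≤ μ a := fun a ha => by
    by_contra! hlt
    apply ha
    change Uᵀ a ⬝ᵥ v = 0
    rw [← hw, dotProduct_mulVec, ← mulVec_transpose, hXstar.1.eq, hker a hlt, zero_dotProduct]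
  have hMv : m * (v ⬝ᵥ v) ≤ v ⬝ᵥ (M *ᵥ v) := hM ▸ le_dotProduct_conj_mulVec hU hsuppM
  have habs := (abs_le.mp (abs_dotProduct_mulVec_sub_le hδ v)).1
  rw [← hWdec]
  nlinarith [mul_le_mul_of_nonneg_left hMv hη]

lemma le_sum_clip (hXstar : Xstar ∈ Fantope n k) (hWh : W.IsHermitian) :
    (k : ℝ) ≤ ∑ a, clip (hWh.eigenvalues a - (η * m - δ)) := by
  have hXh : Xstar.IsHermitian := hXstar.2.1.isHermitian
  obtain ⟨Y, hY, hXdec⟩ := hXh.exists_eq_conj_diagonal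
  have hx : hXh.eigenvalues ∈ cappedSimplex (Fin n) k := by
    have := diag_conj_mem_cappedSimplex hY hXstar
    rwa [hXdec, transpose_mul_conj_mul hY, diag_diagonal] at this
  calc (k : ℝ) = ∑ b, hXh.eigenvalues b := hx.2.symm
    _ = ∑ j : Fin n, eigval Xstar (j + 1) := (sum_eigval_succ hXh id).symm
    _ ≤ ∑ j : Fin n, clip (eigval W (j + 1) - (η * m - δ)) := sum_le_sum fun j _ => ?_
    _ = ∑ a, clip (hWh.eigenvalues a - (η * m - δ)) :=
      sum_eigval_succ hWh fun t => clip (t - (η * m - δ))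
  have hq : eigval Xstar (j + 1) ∈ Set.Icc 0 1 := by
    rw [eigval_succ hXh]
    exact hx.1 _
  rcases le_or_gt (eigval Xstar (j + 1)) 0 with hq0 | hq0
  · exact hq0.trans (clip_mem_Icc _).1
  · refine le_clip hq ?_
    linarith [le_eigval_of_eigval_pos hU hM hker hη hδ hXstar hWh (by omega) j.isLt hq0]

theorem rank_le_of_forall_frobNorm_le (hkn : k ≤ n) (hXstar : Xstar ∈ Fantope n k)
    (hWh : W.IsHermitian) {s : ℝ} (hsm : s < m) (hgap : 2 * δ ≤ η * (m - s))
    {P : Matrix (Fin n) (Fin n) ℝ} (hP : P ∈ Fantope n k)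
    (hmin : ∀ Z ∈ Fantope n k, frobNorm (P - W) ≤ frobNorm (Z - W)) :
    P.rank ≤ #{b | s < μ b} := by
  obtain ⟨V, hV, hWdec⟩ := hWh.exists_eq_conj_diagonal
  obtain ⟨θ, hθ⟩ := exists_sum_clip_eq hWh.eigenvalues (k := k) (by simpa using hkn)
  rw [eq_conj_clip_of_forall_frobNorm_le hV hWdec hθ hP hmin, rank_conj_diagonal hV]
  have hθ' := le_sum_clip hU hM hker hη hδ hXstar hWh
  calc #{a | clip (hWh.eigenvalues a - θ) ≠ 0} ≤ #{a | η * s + δ < hWh.eigenvalues a} := by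
        refine card_le_card fun a ha => ?_
        simp only [mem_filter, mem_univ, true_and] at ha ⊢
        linarith [lt_of_clip_sub_ne_zero hθ hθ' ha]
    _ ≤ #{b | s < μ b} := card_lt_eigenvalues_le hU hM hker hη hδ hV hWdec hsm

end Perturbation

theorem stmt13_general {n k : ℕ} (hk : 0 < k) (hkn : k < n)
    (f : Matrix (Fin n) (Fin n) ℝ → ℝ)
    (grad : Matrix (Fin n) (Fin n) ℝ → Matrix (Fin n) (Fin n) ℝ)
    (β : ℝ) (hβ : 0 < β)
    (hgradSymm : ∀ X : Matrix (Fin n) (Fin n) ℝ, (grad X).IsSymm)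
    (hconv : ∀ X Y : Matrix (Fin n) (Fin n) ℝ, X.IsSymm → Y.IsSymm →
      f X + (grad X * (Y - X)).trace ≤ f Y)
    (hsmooth : ∀ X Y : Matrix (Fin n) (Fin n) ℝ, X.IsSymm → Y.IsSymm →
      frobNorm (grad X - grad Y) ≤ β * frobNorm (X - Y))
    (Xstar : Matrix (Fin n) (Fin n) ℝ)
    (hXstarMem : Xstar ∈ Fantope n k)
    (hXstarOpt : ∀ X ∈ Fantope n k, f Xstar ≤ f X)
    (Pi : Matrix (Fin n) (Fin n) ℝ → Matrix (Fin n) (Fin n) ℝ)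
    (hPi : ∀ W : Matrix (Fin n) (Fin n) ℝ, Pi W ∈ Fantope n k ∧
      ∀ Z ∈ Fantope n k, frobNorm (Pi W - W) ≤ frobNorm (Z - W))
    (r : ℕ)
    (hgapr : eigval (-(grad Xstar)) (r + 1) < eigval (-(grad Xstar)) k)
    (η : ℝ) (hη : 0 < η) :
    ∀ r' : ℕ, r ≤ r' → r' ≤ n - 1 →
    ∀ X ∈ Fantope n k,
      frobNorm (X - Xstar) ≤
        η * (eigval (-(grad Xstar)) k - eigval (-(grad Xstar)) (r' + 1)) /
          (2 * (1 + η * β)) →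
      (Pi (X - η • grad X)).rank ≤ r' := by
  intro r' hrr' hr'n X hX hdist
  set M := -grad Xstar
  have hM : M.IsHermitian := isHermitian_iff_isSymm.mpr (hgradSymm Xstar).neg
  obtain ⟨U, hU, hMdec⟩ := hM.exists_eq_conj_diagonal
  have hmax : IsMaxOn (fun Z => (M * Z).trace) (Fantope n k) Xstar := by
    simpa [M] using (isMinOn_trace_grad_mul convex_fantope f grad β (fun X _ => hgradSymm X)
      (fun X hX Y hY => hconv X Y hX.1 hY.1) (fun X hX Y hY => hsmooth X Y hX.1 hY.1) hXstarMem
      hXstarOpt).neg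
  have hker : ∀ a, hM.eigenvalues a < eigval M k → Xstar *ᵥ Uᵀ a = 0 := fun a ha =>
    mulVec_col_eq_zero_of_isMaxOn hU hMdec hXstarMem hmax <| (le_card_eigval_le hM hk hkn.le).trans
      (card_le_card fun b hb => by simp only [mem_filter, mem_univ, true_and] at hb ⊢; linarith)
  have hgap : eigval M (r' + 1) < eigval M k :=
    (eigval_antitone hM (by omega) (by omega) (by omega)).trans_lt hgapr
  have hWh : (X - η • grad X).IsHermitian :=
    isHermitian_iff_isSymm.mpr (hX.1.sub ((hgradSymm X).smul η))
  have hδ : frobNorm ((X - η • grad X) - (Xstar + η • M)) ≤ (1 + η * β) * frobNorm (X - Xstar) := by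
    simpa [M, sub_eq_add_neg] using
      frobNorm_sub_smul_sub_le hη.le (hsmooth X Xstar hX.1 hXstarMem.1)
  have h2δ : 2 * ((1 + η * β) * frobNorm (X - Xstar)) ≤ η * (eigval M k - eigval M (r' + 1)) := by
    rw [le_div_iff₀ (by positivity)] at hdist
    linarith
  obtain ⟨hPmem, hPmin⟩ := hPi (X - η • grad X)
  calc (Pi (X - η • grad X)).rank ≤ #{b | eigval M (r' + 1) < hM.eigenvalues b} :=
        rank_le_of_forall_frobNorm_le hU hMdec hker hη.le hδ hkn.le hXstarMem hWh hgap h2δ hPmem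
          hPmin
    _ ≤ r' := Nat.lt_succ_iff.mp (card_eigval_lt_lt hM (by omega) (by omega))

theorem stmt13 {n k : ℕ} (hk : 0 < k) (hkn : k < n)
    (f : Matrix (Fin n) (Fin n) ℝ → ℝ)
    (grad : Matrix (Fin n) (Fin n) ℝ → Matrix (Fin n) (Fin n) ℝ)
    (β : ℝ) (hβ : 0 < β)
    (hgradSymm : ∀ X : Matrix (Fin n) (Fin n) ℝ, (grad X).IsSymm)
    (hconv : ∀ X Y : Matrix (Fin n) (Fin n) ℝ, X.IsSymm → Y.IsSymm →
      f X + (grad X * (Y - X)).trace ≤ f Y)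
    (hsmooth : ∀ X Y : Matrix (Fin n) (Fin n) ℝ, X.IsSymm → Y.IsSymm →
      frobNorm (grad X - grad Y) ≤ β * frobNorm (X - Y))
    (Xstar : Matrix (Fin n) (Fin n) ℝ)
    (hXstarMem : Xstar ∈ Fantope n k)
    (hXstarOpt : ∀ X ∈ Fantope n k, f Xstar ≤ f X)
    (Pi : Matrix (Fin n) (Fin n) ℝ → Matrix (Fin n) (Fin n) ℝ)
    (hPi : ∀ W : Matrix (Fin n) (Fin n) ℝ, Pi W ∈ Fantope n k ∧
      ∀ Z ∈ Fantope n k, frobNorm (Pi W - W) ≤ frobNorm (Z - W))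
    (r : ℕ) (hkr : k ≤ r) (hrn : r < n)
    (hgapr : eigval (-(grad Xstar)) (r + 1) < eigval (-(grad Xstar)) k)
    (hrmin : ∀ j : ℕ, k ≤ j → j < n →
      eigval (-(grad Xstar)) (j + 1) < eigval (-(grad Xstar)) k → r ≤ j)
    (η : ℝ) (hη : 0 < η) :
    ∀ r' : ℕ, r ≤ r' → r' ≤ n - 1 →
    ∀ X ∈ Fantope n k,
      frobNorm (X - Xstar) ≤
        η * (eigval (-(grad Xstar)) k - eigval (-(grad Xstar)) (r' + 1)) /
          (2 * (1 + η * β)) →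
      (Pi (X - η • grad X)).rank ≤ r' :=
  stmt13_general hk hkn f grad β hβ hgradSymm hconv hsmooth Xstar hXstarMem hXstarOpt Pi hPi r hgapr
    η hη
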